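/- Let q ∈ (0,1), n a positive integer, j, k ∈ {0,1,...,n} with k ≥ j+2, and x ∈ [[j]_q/[n+1]_q, [j+1]_q/[n+1]_q]. Then with M_{k,n,j}(x;q) = p_{n,k}(x;q)([k]_q/[n]_q - x)/p_{n,j}(x;q) and \overline{M}_{k,n,j}(x;q) = p_{n,k}(x;q)([k]_q/[n+1]_q - x)/p_{n,j}(x;q), we have \overline{M}_{k,n,j}(x;q) ≤ M_{k,n,j}(x;q) ≤ (1 + 2/q^{n+1})·\overline{M}_{k,n,j}(x;q). -/

import Mathlib

/-!
Both quotients are `p_{n,k}/p_{n,j} ≥ 0` times `a = [k]/[n+1] - x` and `b = [k]/[n] - x` respectively,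
so it suffices to compare `a ≤ b ≤ (1 + 2/q^{n+1}) a`. The gap is
`b - a = [k] q^n / ([n][n+1]) ≤ q^n / [n+1]`, while `x ≤ [j+1]/[n+1]` and `[k] ≥ [j+1] + q^{k-1}`
give `a ≥ q^{n-1}/[n+1]`. Hence `b ≤ 2a`, which is stronger than the claim because `q^{n+1} ≤ 1`.
-/

noncomputable def qint (q : ℝ) (n : ℕ) : ℝ := ∑ i ∈ Finset.range n, q ^ i

noncomputable def qfact (q : ℝ) : ℕ → ℝ
  | 0 => 1
  | n + 1 => qfact q n * qint q (n + 1)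

noncomputable def qbinom (q : ℝ) (n k : ℕ) : ℝ := qfact q n / (qfact q k * qfact q (n - k))

noncomputable def qBern (q : ℝ) (n k : ℕ) (x : ℝ) : ℝ :=
  qbinom q n k * x ^ k * ∏ s ∈ Finset.range (n - k), (1 - q ^ s * x)

section

variable {q : ℝ}

lemma qint_succ (q : ℝ) (m : ℕ) : qint q (m + 1) = qint q m + q ^ m :=
  Finset.sum_range_succ _ _

lemma qint_nonneg (hq : 0 ≤ q) (m : ℕ) : 0 ≤ qint q m :=
  Finset.sum_nonneg fun i _ => pow_nonneg hq i

lemma qint_pos (hq : 0 < q) {m : ℕ} (hm : m ≠ 0) : 0 < qint q m :=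
  Finset.sum_pos (fun i _ => pow_pos hq i) (Finset.nonempty_range_iff.2 hm)

lemma qint_mono (hq : 0 ≤ q) : Monotone (qint q) := fun _ _ h =>
  Finset.sum_le_sum_of_subset_of_nonneg (Finset.range_subset_range.2 h)
    fun i _ _ => pow_nonneg hq i

lemma qint_add_pow_le_qint_succ (hq : 0 ≤ q) {i m : ℕ} (h : i ≤ m) :
    qint q i + q ^ m ≤ qint q (m + 1) := by
  rw [qint_succ]
  gcongr
  exact qint_mono hq h

lemma qfact_nonneg (hq : 0 ≤ q) : ∀ m, 0 ≤ qfact q m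
  | 0 => zero_le_one
  | m + 1 => mul_nonneg (qfact_nonneg hq m) (qint_nonneg hq _)

lemma qbinom_nonneg (hq : 0 ≤ q) (n k : ℕ) : 0 ≤ qbinom q n k :=
  div_nonneg (qfact_nonneg hq n) (mul_nonneg (qfact_nonneg hq k) (qfact_nonneg hq _))

lemma qBern_nonneg (hq : 0 ≤ q) (hq1 : q ≤ 1) (n k : ℕ) {x : ℝ} (hx0 : 0 ≤ x) (hx1 : x ≤ 1) :
    0 ≤ qBern q n k x := by
  have hfactor (s : ℕ) : 0 ≤ 1 - q ^ s * x :=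
    sub_nonneg.2 (mul_le_one₀ (pow_le_one₀ hq hq1) hx0 hx1)
  unfold qBern
  exact mul_nonneg (mul_nonneg (qbinom_nonneg hq n k) (pow_nonneg hx0 k))
    (Finset.prod_nonneg fun s _ => hfactor s)

lemma qint_div_sub_qint_div_succ_le (hq : 0 < q) {k n : ℕ} (hkn : k ≤ n) (hn : n ≠ 0) :
    qint q k / qint q n - qint q k / qint q (n + 1) ≤ q ^ n / qint q (n + 1) := by
  have hN : 0 < qint q n := qint_pos hq hn
  have hN1 : 0 < qint q (n + 1) := qint_pos hq n.succ_ne_zero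
  have hgap : qint q k / qint q n - qint q k / qint q (n + 1)
      = qint q k / qint q n * (q ^ n / qint q (n + 1)) := by
    rw [qint_succ] at hN1 ⊢
    field_simp
    ring
  rw [hgap]
  exact mul_le_of_le_one_left (by positivity)
    ((div_le_one hN).2 (qint_mono hq.le hkn))

lemma pow_pred_div_le_qint_div_sub (hq : 0 ≤ q) (hq1 : q ≤ 1) {j k n : ℕ} (hjk : j + 2 ≤ k)
    (hkn : k ≤ n) {x : ℝ} (hx : x ≤ qint q (j + 1) / qint q (n + 1)) :
    q ^ (n - 1) / qint q (n + 1) ≤ qint q k / qint q (n + 1) - x := by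
  have hk : qint q (j + 1) + q ^ (k - 1) ≤ qint q k := by
    simpa [Nat.sub_add_cancel (by omega : 1 ≤ k)] using
      qint_add_pow_le_qint_succ hq (by omega : j + 1 ≤ k - 1)
  have hpow : q ^ (n - 1) ≤ q ^ (k - 1) := pow_le_pow_of_le_one hq hq1 (by omega)
  have hdiv : (qint q (j + 1) + q ^ (n - 1)) / qint q (n + 1) ≤ qint q k / qint q (n + 1) :=
    div_le_div_of_nonneg_right (by linarith) (qint_nonneg hq _)
  rw [add_div] at hdiv
  linarith

end

theorem stmt_15_general (q : ℝ) (hq0 : 0 < q) (hq1 : q < 1) (n : ℕ)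
    (j k : ℕ) (hk : k ≤ n) (hjk : j + 2 ≤ k) (x : ℝ)
    (hx : x ∈ Set.Icc (qint q j / qint q (n + 1)) (qint q (j + 1) / qint q (n + 1))) :
    qBern q n k x * (qint q k / qint q (n + 1) - x) / qBern q n j x ≤
      qBern q n k x * (qint q k / qint q n - x) / qBern q n j x ∧
    qBern q n k x * (qint q k / qint q n - x) / qBern q n j x ≤
      (1 + 2 / q ^ (n + 1)) *
        (qBern q n k x * (qint q k / qint q (n + 1) - x) / qBern q n j x) := by
  obtain ⟨hxl, hxr⟩ := hx
  have hN1 : 0 < qint q (n + 1) := qint_pos hq0 n.succ_ne_zero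
  have hx0 : 0 ≤ x := (div_nonneg (qint_nonneg hq0.le j) hN1.le).trans hxl
  have hx1 : x ≤ 1 := hxr.trans <| (div_le_one hN1).2 (qint_mono hq0.le (by omega))
  have hR : 0 ≤ qBern q n k x / qBern q n j x :=
    div_nonneg (qBern_nonneg hq0.le hq1.le n k hx0 hx1) (qBern_nonneg hq0.le hq1.le n j hx0 hx1)
  have ha := pow_pred_div_le_qint_div_sub hq0.le hq1.le hjk hk hxr
  have hgap := qint_div_sub_qint_div_succ_le hq0 hk (by omega)
  have hpow : q ^ n / qint q (n + 1) ≤ q ^ (n - 1) / qint q (n + 1) :=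
    div_le_div_of_nonneg_right (pow_le_pow_of_le_one hq0.le hq1.le (by omega)) hN1.le
  have hc : 1 ≤ 2 / q ^ (n + 1) :=
    (one_le_div (by positivity)).2 ((pow_le_one₀ hq0.le hq1.le).trans one_le_two)
  have hab : qint q k / qint q (n + 1) ≤ qint q k / qint q n :=
    div_le_div_of_nonneg_left (qint_nonneg hq0.le k) (qint_pos hq0 (by omega))
      (qint_mono hq0.le n.le_succ)
  have hb : qint q k / qint q n - x ≤ (1 + 2 / q ^ (n + 1)) * (qint q k / qint q (n + 1) - x) := by
    nlinarith [mul_le_mul_of_nonneg_right hc (ha.trans' (by positivity))]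
  have hform (t : ℝ) : qBern q n k x * t / qBern q n j x = t * (qBern q n k x / qBern q n j x) := by
    ring
  simp only [hform, ← mul_assoc]
  exact ⟨mul_le_mul_of_nonneg_right (by linarith) hR, mul_le_mul_of_nonneg_right hb hR⟩

theorem stmt_15 (q : ℝ) (hq0 : 0 < q) (hq1 : q < 1) (n : ℕ) (hn : 1 ≤ n)
    (j k : ℕ) (hj : j ≤ n) (hk : k ≤ n) (hjk : j + 2 ≤ k) (x : ℝ)
    (hx : x ∈ Set.Icc (qint q j / qint q (n + 1)) (qint q (j + 1) / qint q (n + 1))) :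
    qBern q n k x * (qint q k / qint q (n + 1) - x) / qBern q n j x ≤
      qBern q n k x * (qint q k / qint q n - x) / qBern q n j x ∧
    qBern q n k x * (qint q k / qint q n - x) / qBern q n j x ≤
      (1 + 2 / q ^ (n + 1)) *
        (qBern q n k x * (qint q k / qint q (n + 1) - x) / qBern q n j x) :=
  stmt_15_general q hq0 hq1 n j k hk hjk x hx
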